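/- Let κ_n, κ_t, κ_H, σ_y, G_Ic > 0 with σ_y ≤ √(2κ_t·G_Ic), and let φ ∈ [arcsin(σ_y/√(2κ_t·G_Ic)), π/2]. Set ⟦u⟧_n = √(2G_Ic/κ_n)·cos φ, ⟦u⟧_t = √(2G_Ic/κ_t)·((κ_t+κ_H)/κ_H)·sin φ − σ_y/κ_H, and π = (κ_t/(κ_t+κ_H))·(⟦u⟧_t − σ_y/κ_t). Then π ≥ 0, and the total energy release rate G = κ_n·⟦u⟧_n²/2 + κ_t·(⟦u⟧_t − π)²/2 + σ_y·|π| + κ_H·π²/2 equals G_c(φ) = G_Ic·(1 + (κ_t/κ_H)·sin² φ) − σ_y²/(2κ_H). -/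

import Mathlib

/-! The elastic part of the tangential jump is `⟦u⟧_t − π = √(2G_Ic/κ_t)·sin φ`, so the elastic
energy is `G_Ic (cos² φ + sin² φ) = G_Ic`. The plastic slip satisfies
`κ_H π + σ_y = κ_t √(2G_Ic/κ_t) sin φ`, hence `σ_y π + κ_H π²/2 = ((κ_H π + σ_y)² − σ_y²)/(2κ_H)`
`= (κ_t/κ_H) G_Ic sin² φ − σ_y²/(2κ_H)`. The lower bound on `φ` says exactly `κ_H π ≥ 0`. -/

open Real

theorem Real.le_sin_of_arcsin_le {x y : ℝ} (hx : x ≤ 1) (hy : y ≤ π / 2) (h : arcsin x ≤ y) :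
    x ≤ sin y := by
  rcases le_total x (-1) with hx₁ | hx₁
  · exact hx₁.trans (neg_one_le_sin y)
  · exact (arcsin_le_iff_le_sin ⟨hx₁, hx⟩ ⟨(neg_pi_div_two_le_arcsin x).trans h, hy⟩).1 h

theorem Real.mul_sqrt_div {κ : ℝ} (hκ : 0 < κ) (x : ℝ) : κ * √(x / κ) = √(κ * x) := by
  rw [show κ * x = κ ^ 2 * (x / κ) by field_simp, sqrt_mul (sq_nonneg κ), sqrt_sq hκ.le]

theorem Real.mul_sq_sqrt_div_mul {κ G : ℝ} (hκ : 0 < κ) (hG : 0 ≤ G) (t : ℝ) :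
    κ * (√(G / κ) * t) ^ 2 = G * t ^ 2 := by
  rw [mul_pow, sq_sqrt (by positivity)]
  field_simp

section PlasticSlip

variable {κt κH σy a s : ℝ}

theorem plasticSlip_eq (hκt : 0 < κt) (hκH : 0 < κH) :
    κt / (κt + κH) * ((a * ((κt + κH) / κH) * s - σy / κH) - σy / κt)
      = (κt * a * s - σy) / κH := by
  field_simp
  ring

theorem tangentialJump_sub_plasticSlip (hκH : 0 < κH) :
    (a * ((κt + κH) / κH) * s - σy / κH) - (κt * a * s - σy) / κH = a * s := by
  field_simp
  ring

end PlasticSlip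

theorem stmt_6_general (κn κt κH σy GIc φ : ℝ) (hκn : 0 < κn) (hκt : 0 < κt) (hκH : 0 < κH)
    (hG : 0 < GIc) (hub : σy ≤ Real.sqrt (2 * κt * GIc))
    (hφ : φ ∈ Set.Icc (Real.arcsin (σy / Real.sqrt (2 * κt * GIc))) (Real.pi / 2)) :
    let un := Real.sqrt (2 * GIc / κn) * Real.cos φ
    let ut := Real.sqrt (2 * GIc / κt) * ((κt + κH) / κH) * Real.sin φ - σy / κH
    let pl := κt / (κt + κH) * (ut - σy / κt)
    0 ≤ pl ∧
      κn * un ^ 2 / 2 + κt * (ut - pl) ^ 2 / 2 + σy * |pl| + κH * pl ^ 2 / 2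
        = GIc * (1 + (κt / κH) * Real.sin φ ^ 2) - σy ^ 2 / (2 * κH) := by
  intro un ut pl
  set a := √(2 * GIc / κt)
  have hS : κt * a = √(2 * κt * GIc) := by rw [mul_sqrt_div hκt, mul_left_comm, ← mul_assoc]
  have hSpos : 0 < √(2 * κt * GIc) := sqrt_pos.2 (by positivity)
  have hsin : σy ≤ κt * a * sin φ := by
    rw [hS, ← div_le_iff₀' hSpos]
    exact le_sin_of_arcsin_le ((div_le_one hSpos).2 hub) hφ.2 hφ.1
  have hpl : pl = (κt * a * sin φ - σy) / κH := plasticSlip_eq hκt hκH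
  have hpl_nonneg : 0 ≤ pl := hpl ▸ div_nonneg (sub_nonneg.2 hsin) hκH.le
  refine ⟨hpl_nonneg, ?_⟩
  rw [abs_of_nonneg hpl_nonneg, show ut - pl = a * sin φ from
    hpl ▸ tangentialJump_sub_plasticSlip hκH, mul_sq_sqrt_div_mul hκn (by positivity),
    mul_sq_sqrt_div_mul hκt (by positivity), hpl]
  have ha : κt * a ^ 2 = 2 * GIc := by rw [sq_sqrt (by positivity)]; field_simp
  field_simp
  linear_combination (2 * GIc * κH) * cos_sq_add_sin_sq φ + sin φ ^ 2 * κt * ha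

/-- On the plastic branch `φ ∈ [arcsin(σy/√(2κt·G_Ic)), π/2]`, the plastic slip
`pl` at damage initiation is nonnegative and the total energy release rate
`κn·un²/2 + κt·(ut−pl)²/2 + σy·|pl| + κH·pl²/2` equals
`G_c(φ) = G_Ic·(1 + (κt/κH)·sin²φ) − σy²/(2κH)`. -/
theorem stmt_6 (κn κt κH σy GIc φ : ℝ) (hκn : 0 < κn) (hκt : 0 < κt) (hκH : 0 < κH)
    (hσy : 0 < σy) (hG : 0 < GIc) (hub : σy ≤ Real.sqrt (2 * κt * GIc))
    (hφ : φ ∈ Set.Icc (Real.arcsin (σy / Real.sqrt (2 * κt * GIc))) (Real.pi / 2)) :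
    let un := Real.sqrt (2 * GIc / κn) * Real.cos φ
    let ut := Real.sqrt (2 * GIc / κt) * ((κt + κH) / κH) * Real.sin φ - σy / κH
    let pl := κt / (κt + κH) * (ut - σy / κt)
    0 ≤ pl ∧
      κn * un ^ 2 / 2 + κt * (ut - pl) ^ 2 / 2 + σy * |pl| + κH * pl ^ 2 / 2
        = GIc * (1 + (κt / κH) * Real.sin φ ^ 2) - σy ^ 2 / (2 * κH) :=
  stmt_6_general κn κt κH σy GIc φ hκn hκt hκH hG hub hφ
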